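/- arXiv:1510.00982 — 4 statements merged into one kernel-verified Lean document; each statement's English description precedes it below -/
import Mathlib

section
/- Let k ≥ 3 and let w_k be the multiplicative arithmetic function defined on prime powers by w_k(p^{uk+1}) = k·p^{-u-1/2} for u ≥ 0, and w_k(p^{uk+v}) = p^{-u-1} for u ≥ 0 and 2 ≤ v ≤ k. Then for every positive integer q one has w_k(q) ≥ q^{-1/2}. -/
/-! Both sides of `q ^ (-1/2) ≤ w q` are multiplicative, so it suffices to check prime powers
`p ^ e`, where `q ^ (-1/2) = p ^ (-e/2)`. Writing `e = u k + v` with `1 ≤ v ≤ k`, the exponent of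
`p` in `w (p ^ e)` is `-u - 1/2` (for `v = 1`) or `-u - 1` (for `v ≥ 2`), and both are at least
`-e/2` because `u k ≥ 2 u`; the factor `k ≥ 1` in the case `v = 1` only helps. -/

open Real

theorem Nat.exists_eq_mul_add_of_pos {k e : ℕ} (hk : 0 < k) (he : 0 < e) :
    ∃ u v, 1 ≤ v ∧ v ≤ k ∧ e = u * k + v :=
  ⟨(e - 1) / k, (e - 1) % k + 1, by omega, by have := Nat.mod_lt (e - 1) hk; omega,
    by have := Nat.div_add_mod' (e - 1) k; omega⟩

theorem rpow_le_of_prime_pow_le {w : ℕ → ℝ} (s : ℝ) (hw1 : w 1 = 1)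
    (hmul : ∀ m n : ℕ, Nat.Coprime m n → w (m * n) = w m * w n)
    (hpow : ∀ p e : ℕ, p.Prime → 0 < e → ((p ^ e : ℕ) : ℝ) ^ s ≤ w (p ^ e)) :
    ∀ q : ℕ, 0 < q → (q : ℝ) ^ s ≤ w q := by
  intro q
  induction q using Nat.recOnPosPrimePosCoprime with
  | prime_pow p e hp he => exact fun _ ↦ hpow p e hp he
  | zero => exact fun h ↦ absurd h (lt_irrefl 0)
  | one => simp [hw1]
  | coprime a b ha hb hab iha ihb =>
    intro _
    have hsa := iha (by omega)
    rw [hmul a b hab, Nat.cast_mul, mul_rpow (by positivity) (by positivity)]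
    exact mul_le_mul hsa (ihb (by omega)) (by positivity) ((by positivity : (0 : ℝ) ≤ _).trans hsa)

theorem natCast_pow_rpow_neg_half_le {p : ℕ} (hp : 1 ≤ p) {e : ℕ} {c : ℝ}
    (h : -(e : ℝ) / 2 ≤ c) : ((p ^ e : ℕ) : ℝ) ^ (-(1/2 : ℝ)) ≤ (p : ℝ) ^ c := by
  rw [Nat.cast_pow, ← rpow_natCast, ← rpow_mul (Nat.cast_nonneg p)]
  exact rpow_le_rpow_of_exponent_le (by exact_mod_cast hp) (by linarith)

theorem stmt_2 (k : ℕ) (hk : 3 ≤ k) (w : ℕ → ℝ)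
    (hw1 : w 1 = 1)
    (hmul : ∀ m n : ℕ, Nat.Coprime m n → w (m * n) = w m * w n)
    (hp1 : ∀ p u : ℕ, p.Prime → w (p ^ (u * k + 1)) = (k : ℝ) * (p : ℝ) ^ (-(u : ℝ) - 1/2))
    (hp2 : ∀ p u v : ℕ, p.Prime → 2 ≤ v → v ≤ k →
      w (p ^ (u * k + v)) = (p : ℝ) ^ (-(u : ℝ) - 1)) :
    ∀ q : ℕ, 0 < q → (q : ℝ) ^ (-(1/2 : ℝ)) ≤ w q := by
  refine rpow_le_of_prime_pow_le _ hw1 hmul fun p e hp he ↦ ?_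
  obtain ⟨u, v, hv1, hvk, rfl⟩ := Nat.exists_eq_mul_add_of_pos (by omega : 0 < k) he
  have huk : 2 * (u : ℝ) ≤ u * k := by
    rw [mul_comm]; exact mul_le_mul_of_nonneg_left (by exact_mod_cast (by omega : 2 ≤ k)) u.cast_nonneg
  rcases hv1.eq_or_lt with rfl | hv2
  · rw [hp1 p u hp]
    refine (natCast_pow_rpow_neg_half_le hp.one_lt.le ?_).trans
      (le_mul_of_one_le_left (by positivity) (by exact_mod_cast (by omega : 1 ≤ k)))
    push_cast
    linarith
  · rw [hp2 p u v hp hv2 hvk]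
    refine natCast_pow_rpow_neg_half_le hp.one_lt.le ?_
    have hv : (2 : ℝ) ≤ v := by exact_mod_cast hv2
    push_cast
    linarith
end

section
/- Let k ≥ 3 and let w_k be the multiplicative function defined on prime powers by w_k(p^{uk+1}) = k·p^{-u-1/2} and w_k(p^{uk+v}) = p^{-u-1} for 2 ≤ v ≤ k. Then there is a constant C = C(k) such that w_k(q) ≤ C·q^{-1/k} for all positive integers q. -/
theorem stmt_3 (k : ℕ) (hk : 3 ≤ k) (w : ℕ → ℝ)
    (hw1 : w 1 = 1)
    (hmul : ∀ m n : ℕ, Nat.Coprime m n → w (m * n) = w m * w n)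
    (hp1 : ∀ p u : ℕ, p.Prime → w (p ^ (u * k + 1)) = (k : ℝ) * (p : ℝ) ^ (-(u : ℝ) - 1/2))
    (hp2 : ∀ p u v : ℕ, p.Prime → 2 ≤ v → v ≤ k →
      w (p ^ (u * k + v)) = (p : ℝ) ^ (-(u : ℝ) - 1)) :
    ∃ C : ℝ, ∀ q : ℕ, 0 < q → w q ≤ C * (q : ℝ) ^ (-(1 / (k : ℝ))) := by
  have hkR : (3:ℝ) ≤ (k:ℝ) := by exact_mod_cast hk
  have hk0 : (0:ℝ) < (k:ℝ) := by linarith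
  have hk13 : (1:ℝ)/(k:ℝ) ≤ 1/3 := by
    apply one_div_le_one_div_of_le (by norm_num) hkR
  have hk1k : (0:ℝ) < 1/(k:ℝ) := by positivity
  set N : ℕ := k ^ 6 with hN
  set Small : Finset ℕ := (Finset.range N).filter Nat.Prime with hSmall
  set c : ℕ → ℝ := fun p => if p < N then (k:ℝ) else 1 with hc
  have hc1 : ∀ p, 1 ≤ c p := by
    intro p; simp only [hc]; split
    · linarith
    · exact le_refl 1
  -- key per prime-power bound
  have key : ∀ p e : ℕ, p.Prime → 1 ≤ e →
      0 ≤ w (p ^ e) ∧ w (p ^ e) ≤ c p * (((p:ℝ) ^ e) ^ (-(1/(k:ℝ)))) := by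
    intro p e hp he
    have hpc2 : (2:ℝ) ≤ (p:ℝ) := by exact_mod_cast hp.two_le
    have hpc1 : (1:ℝ) ≤ (p:ℝ) := by linarith
    have hpc0 : (0:ℝ) < (p:ℝ) := by linarith
    set u : ℕ := (e-1)/k with hu
    set v : ℕ := (e-1)%k + 1 with hv
    have hkpos : 0 < k := by omega
    have hdm := Nat.mod_add_div' (e-1) k
    have hev : e = u*k + v := by rw [hu, hv]; omega
    have hv1 : 1 ≤ v := by omega
    have hvk : v ≤ k := by
      have := Nat.mod_lt (e-1) hkpos
      omega
    have heR : (e:ℝ) = (u:ℝ)*(k:ℝ) + (v:ℝ) := by exact_mod_cast congrArg (Nat.cast (R := ℝ)) hev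
    have hpe : ((p:ℝ) ^ e) ^ (-(1/(k:ℝ))) = (p:ℝ) ^ (-((u:ℝ)) - (v:ℝ)/(k:ℝ)) := by
      rw [← Real.rpow_natCast (p:ℝ) e, ← Real.rpow_mul (le_of_lt hpc0)]
      congr 1
      rw [heR]; field_simp; ring
    rw [hpe]
    rcases eq_or_lt_of_le hv1 with hv1' | hv2
    · -- v = 1
      have hwe : w (p ^ e) = (k : ℝ) * (p : ℝ) ^ (-(u : ℝ) - 1/2) := by
        rw [hev, ← hv1']; exact hp1 p u hp
      constructor
      · rw [hwe]; positivity
      · rw [hwe, ← hv1']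
        have hsplit : (p:ℝ) ^ (-(u : ℝ) - 1/2)
            = (p:ℝ) ^ ((1:ℝ)/(k:ℝ) - 1/2) * (p:ℝ) ^ (-(u:ℝ) - ((1:ℕ):ℝ)/(k:ℝ)) := by
          rw [← Real.rpow_add hpc0]; congr 1; push_cast; ring
        rw [hsplit, ← mul_assoc]
        apply mul_le_mul_of_nonneg_right _ (Real.rpow_nonneg (le_of_lt hpc0) _)
        -- need k * p^(1/k - 1/2) ≤ c p
        by_cases hpN : p < N
        · have : c p = (k:ℝ) := by simp [hc, hpN]
          rw [this]
          have h1 : (p:ℝ) ^ ((1:ℝ)/(k:ℝ) - 1/2) ≤ 1 :=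
            Real.rpow_le_one_of_one_le_of_nonpos hpc1 (by linarith)
          nlinarith
        · have hcp : c p = 1 := by simp [hc, hpN]
          rw [hcp]
          have hNp : ((k:ℝ)) ^ (6:ℕ) ≤ (p:ℝ) := by
            have : N ≤ p := le_of_not_gt hpN
            exact_mod_cast this
          have hx0 : (0:ℝ) < (p:ℝ) ^ ((1:ℝ)/2 - 1/(k:ℝ)) := Real.rpow_pos_of_pos hpc0 _
          have hkx : (k:ℝ) ≤ (p:ℝ) ^ ((1:ℝ)/2 - 1/(k:ℝ)) := by
            have h6 : (k:ℝ) = ((k:ℝ) ^ (6:ℕ)) ^ ((1:ℝ)/6) := by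
              rw [← Real.rpow_natCast (k:ℝ) 6, ← Real.rpow_mul (le_of_lt hk0)]
              norm_num
            calc (k:ℝ) = ((k:ℝ) ^ (6:ℕ)) ^ ((1:ℝ)/6) := h6
              _ ≤ (p:ℝ) ^ ((1:ℝ)/6) :=
                  Real.rpow_le_rpow (by positivity) hNp (by norm_num)
              _ ≤ (p:ℝ) ^ ((1:ℝ)/2 - 1/(k:ℝ)) :=
                  Real.rpow_le_rpow_of_exponent_le hpc1 (by linarith)
          have hinv : (p:ℝ) ^ ((1:ℝ)/(k:ℝ) - 1/2) = ((p:ℝ) ^ ((1:ℝ)/2 - 1/(k:ℝ)))⁻¹ := by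
            rw [← Real.rpow_neg (le_of_lt hpc0)]; congr 1; ring
          rw [hinv]
          calc (k:ℝ) * ((p:ℝ) ^ ((1:ℝ)/2 - 1/(k:ℝ)))⁻¹
              ≤ (p:ℝ) ^ ((1:ℝ)/2 - 1/(k:ℝ)) * ((p:ℝ) ^ ((1:ℝ)/2 - 1/(k:ℝ)))⁻¹ :=
                mul_le_mul_of_nonneg_right hkx (by positivity)
            _ = 1 := mul_inv_cancel₀ (ne_of_gt hx0)
    · -- 2 ≤ v
      have hwe : w (p ^ e) = (p : ℝ) ^ (-(u : ℝ) - 1) := by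
        rw [hev]; exact hp2 p u v hp hv2 hvk
      constructor
      · rw [hwe]; positivity
      · rw [hwe]
        have hvkR : (v:ℝ)/(k:ℝ) ≤ 1 := by
          rw [div_le_one hk0]; exact_mod_cast hvk
        calc (p:ℝ) ^ (-(u:ℝ) - 1) ≤ (p:ℝ) ^ (-(u:ℝ) - (v:ℝ)/(k:ℝ)) :=
              Real.rpow_le_rpow_of_exponent_le hpc1 (by linarith)
          _ = 1 * (p:ℝ) ^ (-(u:ℝ) - (v:ℝ)/(k:ℝ)) := (one_mul _).symm
          _ ≤ c p * (p:ℝ) ^ (-(u:ℝ) - (v:ℝ)/(k:ℝ)) :=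
              mul_le_mul_of_nonneg_right (hc1 p) (Real.rpow_nonneg (le_of_lt hpc0) _)
    
  refine ⟨(k:ℝ) ^ Small.card, ?_⟩
  intro q hq
  have hq0 : q ≠ 0 := hq.ne'
  have hfact := Nat.multiplicative_factorization w hmul hw1 hq0
  set S : Finset ℕ := q.factorization.support with hS
  have hSprime : ∀ p ∈ S, p.Prime := fun p hp =>
    Nat.prime_of_mem_primeFactors (by rwa [← Nat.support_factorization])
  have hSpos : ∀ p ∈ S, 1 ≤ q.factorization p := fun p hp =>
    Nat.one_le_iff_ne_zero.mpr (Finsupp.mem_support_iff.mp hp)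
  -- express q as a product
  have hqprod : (q:ℝ) = ∏ p ∈ S, ((p:ℝ) ^ (q.factorization p)) := by
    conv_lhs => rw [← Nat.factorization_prod_pow_eq_self hq0]
    rw [Finsupp.prod]
    push_cast
    rfl
  have hqpow : (q:ℝ) ^ (-(1/(k:ℝ))) = ∏ p ∈ S, ((p:ℝ) ^ (q.factorization p)) ^ (-(1/(k:ℝ))) := by
    rw [hqprod, Real.finset_prod_rpow S _ (fun p _ => by positivity) _]
  have hwq : w q = ∏ p ∈ S, w (p ^ (q.factorization p)) := by
    rw [hfact]; rfl
  have step1 : w q ≤ ∏ p ∈ S, (c p * ((p:ℝ) ^ (q.factorization p)) ^ (-(1/(k:ℝ)))) := by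
    rw [hwq]
    apply Finset.prod_le_prod
    · intro p hp; exact (key p _ (hSprime p hp) (hSpos p hp)).1
    · intro p hp; exact (key p _ (hSprime p hp) (hSpos p hp)).2
  rw [Finset.prod_mul_distrib] at step1
  have hcprod : (∏ p ∈ S, c p) ≤ (k:ℝ) ^ Small.card := by
    have h1 : (∏ p ∈ S, c p) = ∏ p ∈ S.filter (· < N), (k:ℝ) := by
      rw [Finset.prod_filter]
    rw [h1, Finset.prod_const]
    apply pow_le_pow_right₀ (by linarith)
    apply Finset.card_le_card
    intro p hp
    obtain ⟨hp1', hp2'⟩ := Finset.mem_filter.mp hp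
    exact Finset.mem_filter.mpr ⟨Finset.mem_range.mpr hp2', hSprime p hp1'⟩
  have hT : (0:ℝ) ≤ ∏ p ∈ S, ((p:ℝ) ^ (q.factorization p)) ^ (-(1/(k:ℝ))) := by
    apply Finset.prod_nonneg; intro p _; positivity
  calc w q ≤ (∏ p ∈ S, c p) * ∏ p ∈ S, ((p:ℝ) ^ (q.factorization p)) ^ (-(1/(k:ℝ))) := step1
    _ ≤ (k:ℝ) ^ Small.card * ∏ p ∈ S, ((p:ℝ) ^ (q.factorization p)) ^ (-(1/(k:ℝ))) :=
        mul_le_mul_of_nonneg_right hcprod hT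
    _ = (k:ℝ) ^ Small.card * (q:ℝ) ^ (-(1/(k:ℝ))) := by rw [hqpow]
end

section
/- Let k ≥ 2, θ = 1 - 1/k, σ = 1/(2k² - 10k + 12), φ = θ + σ/k, t = ⌈(k/2) log k⌉, u = ⌈2k log k⌉ - t - 4, and γ = ⌈2k log k⌉ - 2k log k. Then θ^t·φ^u = e^{(4-γ)/k}·(1/k² - (log k)/k³ + O(k^{-7/2})) as k → ∞. -/
/-!
Both `θ = 1 - 1/k` and `φ = 1 - (1 - σ)/k` have logarithm `-1/k - 1/(2k²) + O(k⁻³)`, because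
`σ ≤ 1/k²`. Since `t + u = 2k log k + γ - 4`, the exponent `t log θ + u log φ` is
`-2 log k + (4 - γ)/k - (log k)/k + O((log k)/k²)`. Exponentiating with `e^S = 1 + S + O(S²)`
leaves an error `O((log k)²/k⁴)`, and `(log k)² = O(√k)`.
-/

open Real

lemma abs_log_one_sub_add_add_sq_div_two_le {x : ℝ} (h0 : 0 ≤ x) (h1 : x ≤ 1 / 2) :
    |log (1 - x) + x + x ^ 2 / 2| ≤ 2 * x ^ 3 := by
  have hx : |x| < 1 := by rw [abs_of_nonneg h0]; linarith
  have h := abs_log_sub_add_sum_range_le hx 2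
  simp only [Finset.sum_range_succ, Finset.sum_range_zero, abs_of_nonneg h0] at h
  norm_num at h
  calc |log (1 - x) + x + x ^ 2 / 2| = |x + x ^ 2 / 2 + log (1 - x)| := by ring_nf
    _ ≤ x ^ 3 / (1 - x) := h
    _ ≤ 2 * x ^ 3 := by
      rw [div_le_iff₀ (by linarith)]
      nlinarith [pow_nonneg h0 3]

lemma abs_log_one_sub_add_le_of_sub_le {x h : ℝ} (h0 : 0 ≤ x) (hxh : x ≤ h) (h1 : h ≤ 1 / 2)
    (hgap : h - x ≤ h ^ 3) : |log (1 - x) + (h + h ^ 2 / 2)| ≤ 4 * h ^ 3 := by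
  have hx := abs_log_one_sub_add_add_sq_div_two_le h0 (hxh.trans h1)
  have hx3 : x ^ 3 ≤ h ^ 3 := pow_le_pow_left₀ h0 hxh 3
  have hsq : (h ^ 2 - x ^ 2) / 2 ≤ h ^ 3 := by nlinarith
  have hsq' : 0 ≤ (h ^ 2 - x ^ 2) / 2 := by nlinarith
  calc |log (1 - x) + (h + h ^ 2 / 2)|
      = |(log (1 - x) + x + x ^ 2 / 2) + ((h - x) + (h ^ 2 - x ^ 2) / 2)| := by ring_nf
    _ ≤ |log (1 - x) + x + x ^ 2 / 2| + |(h - x) + (h ^ 2 - x ^ 2) / 2| := abs_add_le _ _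
    _ ≤ 2 * h ^ 3 + 2 * h ^ 3 := by
      rw [abs_of_nonneg (a := (h - x) + (h ^ 2 - x ^ 2) / 2) (by linarith)]
      linarith
    _ = 4 * h ^ 3 := by ring

lemma abs_mul_add_mul_add_le {a b c ε : ℝ} (ha : |a + c| ≤ ε) (hb : |b + c| ≤ ε) (t u : ℕ) :
    |t * a + u * b + (t + u) * c| ≤ (t + u) * ε := by
  have ht : (0 : ℝ) ≤ t := t.cast_nonneg
  have hu : (0 : ℝ) ≤ u := u.cast_nonneg
  calc |t * a + u * b + (t + u) * c| = |t * (a + c) + u * (b + c)| := by ring_nf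
    _ ≤ t * |a + c| + u * |b + c| := by
      refine (abs_add_le _ _).trans_eq ?_
      rw [abs_mul, abs_mul, abs_of_nonneg ht, abs_of_nonneg hu]
    _ ≤ (t + u) * ε := by nlinarith

lemma abs_exp_sub_one_add_le {x y ε : ℝ} (hx : |x| ≤ 1) (hxy : |x - y| ≤ ε) :
    |exp x - (1 + y)| ≤ x ^ 2 + ε :=
  calc |exp x - (1 + y)| = |(exp x - 1 - x) + (x - y)| := by ring_nf
    _ ≤ |exp x - 1 - x| + |x - y| := abs_add_le _ _
    _ ≤ x ^ 2 + ε := add_le_add (abs_exp_sub_one_sub_id_le hx) hxy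

lemma log_sq_div_pow_four_le {x : ℝ} (hx : 1 ≤ x) :
    log x ^ 2 / x ^ 4 ≤ 16 * x ^ (-(7 / 2) : ℝ) := by
  have hx0 : 0 < x := by linarith
  have hlog := log_le_rpow_div hx0.le (by norm_num : (0 : ℝ) < 1 / 4)
  have hsq : log x ^ 2 ≤ 16 * x ^ (1 / 2 : ℝ) := by
    have : (x ^ (1 / 4 : ℝ)) ^ 2 = x ^ (1 / 2 : ℝ) := by
      rw [← rpow_natCast, ← rpow_mul hx0.le]; norm_num
    nlinarith [log_nonneg hx]
  have hpow : x ^ (1 / 2 : ℝ) / x ^ 4 = x ^ (-(7 / 2) : ℝ) := by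
    rw [← rpow_natCast, ← rpow_sub hx0]; norm_num
  calc log x ^ 2 / x ^ 4 ≤ 16 * x ^ (1 / 2 : ℝ) / x ^ 4 := by gcongr
    _ = 16 * x ^ (-(7 / 2) : ℝ) := by rw [mul_div_assoc, hpow]

lemma two_mul_log_le_self {x : ℝ} (hx : 16 ≤ x) : 2 * log x ≤ x := by
  have hs : 4 ≤ √x := by rw [show (4 : ℝ) = √16 by norm_num]; exact sqrt_le_sqrt hx
  have hsq := mul_self_sqrt (show 0 ≤ x by linarith)
  have := log_le_sub_one_of_pos (show 0 < √x by linarith)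
  rw [log_sqrt (by linarith)] at this
  nlinarith

lemma one_div_quadratic_nonneg_and_le {k : ℝ} (hk : 9 ≤ k) :
    0 ≤ 1 / (2 * k ^ 2 - 10 * k + 12) ∧ 1 / (2 * k ^ 2 - 10 * k + 12) ≤ 1 / k ^ 2 :=
  ⟨div_nonneg zero_le_one (by nlinarith),
    one_div_le_one_div_of_le (by nlinarith) (by nlinarith)⟩

lemma abs_log_one_sub_inv_add_le {k σ : ℝ} (hk : 2 ≤ k) (hσ0 : 0 ≤ σ) (hσ : σ ≤ 1 / k ^ 2) :
    |log (1 - 1 / k + σ / k) + (1 / k + (1 / k) ^ 2 / 2)| ≤ 4 * (1 / k) ^ 3 := by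
  have hk0 : 0 < k := by linarith
  have hσ1 : σ ≤ 1 := hσ.trans (by rw [div_le_one (by positivity)]; nlinarith)
  rw [show 1 - 1 / k + σ / k = 1 - (1 - σ) / k by ring]
  refine abs_log_one_sub_add_le_of_sub_le (by positivity) ?_ ?_ ?_
  · gcongr; linarith
  · rw [div_le_iff₀ hk0]; linarith
  · calc 1 / k - (1 - σ) / k = σ * (1 / k) := by ring
      _ ≤ 1 / k ^ 2 * (1 / k) := by gcongr
      _ = (1 / k) ^ 3 := by ring

lemma cast_add_eq_ceil_sub_four {x : ℝ} {t u : ℕ} (ht : (t : ℝ) + 4 ≤ x)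
    (hu : u = ⌈x⌉₊ - t - 4) : (t + u : ℝ) = ⌈x⌉₊ - 4 := by
  have htx : t + 4 ≤ ⌈x⌉₊ := by exact_mod_cast ht.trans (Nat.le_ceil x)
  rw [← Nat.cast_add, show t + u = ⌈x⌉₊ - 4 by omega, Nat.cast_sub (by omega)]
  push_cast; ring

lemma abs_exponent_sub_le {k L γ n X : ℝ} (hk : 0 < k) (hL : 1 ≤ L) (hγ0 : 0 ≤ γ) (hγ1 : γ ≤ 1)
    (hn : n = 2 * k * L + γ - 4)
    (hX : |X + n * (1 / k + (1 / k) ^ 2 / 2)| ≤ n * (4 * (1 / k) ^ 3)) :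
    |X - ((4 - γ) / k - 2 * L - L / k)| ≤ 10 * L / k ^ 2 := by
  have hsplit : X - ((4 - γ) / k - 2 * L - L / k)
      = (X + n * (1 / k + (1 / k) ^ 2 / 2)) + (4 - γ) / (2 * k ^ 2) := by
    rw [hn]; field_simp; ring
  have hn4 : n * (4 * (1 / k) ^ 3) ≤ 8 * L / k ^ 2 := by
    calc n * (4 * (1 / k) ^ 3) ≤ 2 * k * L * (4 * (1 / k) ^ 3) := by gcongr; linarith
      _ = 8 * L / k ^ 2 := by field_simp; ring
  have hγ4 : (4 - γ) / (2 * k ^ 2) ≤ 2 * L / k ^ 2 := by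
    rw [div_le_div_iff₀ (by positivity) (by positivity)]; nlinarith [sq_nonneg k]
  rw [hsplit]
  calc _ ≤ |X + n * (1 / k + (1 / k) ^ 2 / 2)| + |(4 - γ) / (2 * k ^ 2)| := abs_add_le _ _
    _ ≤ 8 * L / k ^ 2 + 2 * L / k ^ 2 := by
      rw [abs_of_nonneg (a := (4 - γ) / (2 * k ^ 2)) (by apply div_nonneg <;> nlinarith)]
      linarith
    _ = 10 * L / k ^ 2 := by ring

lemma abs_exp_sub_exp_mul_le {k a X : ℝ} (hk : 10 ≤ k) (hL : 1 ≤ log k) (hLk : 2 * log k ≤ k)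
    (ha : a ≤ 1) (hX : |X - (a - 2 * log k - log k / k)| ≤ 10 * log k / k ^ 2) :
    |exp X - exp a * (1 / k ^ 2 - log k / k ^ 3)| ≤ 42 * log k ^ 2 / k ^ 4 := by
  have hk0 : 0 < k := by linarith
  set L := log k with hLdef
  set S := X - a + 2 * L
  have hexp : exp X = exp a / k ^ 2 * exp S := by
    have : exp (2 * L) = k ^ 2 := by rw [two_mul, exp_add, hLdef, exp_log hk0]; ring
    rw [show X = a + S - 2 * L by ring, exp_sub, exp_add, this]; ring
  have hS : |S - -(L / k)| ≤ 10 * L / k ^ 2 := by convert hX using 2; ring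
  have h10 : 10 * L / k ^ 2 ≤ L / k := by
    rw [div_le_div_iff₀ (by positivity) hk0]
    nlinarith [mul_nonneg (mul_nonneg (by linarith : 0 ≤ L) hk0.le) (by linarith : 0 ≤ k - 10)]
  have hS2 : |S| ≤ 2 * L / k := by
    calc |S| = |(S - -(L / k)) + -(L / k)| := by ring_nf
      _ ≤ 10 * L / k ^ 2 + L / k := by
        refine (abs_add_le _ _).trans (add_le_add hS ?_)
        rw [abs_neg, abs_of_nonneg (by positivity)]
      _ ≤ 2 * L / k := by rw [show 2 * L / k = L / k + L / k by ring]; linarith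
  have hS1 : |S| ≤ 1 := hS2.trans (by rw [div_le_one hk0]; exact hLk)
  have hE : |exp S - (1 + -(L / k))| ≤ 14 * L ^ 2 / k ^ 2 := by
    have hsq : S ^ 2 ≤ 4 * L ^ 2 / k ^ 2 := by
      calc S ^ 2 = |S| ^ 2 := (sq_abs S).symm
        _ ≤ (2 * L / k) ^ 2 := by gcongr
        _ = 4 * L ^ 2 / k ^ 2 := by ring
    have hlin : 10 * L / k ^ 2 ≤ 10 * L ^ 2 / k ^ 2 := by gcongr; nlinarith
    have := abs_exp_sub_one_add_le hS1 hS
    rw [show 14 * L ^ 2 / k ^ 2 = 4 * L ^ 2 / k ^ 2 + 10 * L ^ 2 / k ^ 2 by ring]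
    linarith
  have hexpa : exp a ≤ 3 := (exp_le_exp.mpr ha).trans (by linarith [exp_one_lt_d9])
  calc |exp X - exp a * (1 / k ^ 2 - L / k ^ 3)|
      = exp a / k ^ 2 * |exp S - (1 + -(L / k))| := by
        rw [hexp, ← abs_of_pos (by positivity : 0 < exp a / k ^ 2), ← abs_mul,
          abs_of_pos (by positivity : 0 < exp a / k ^ 2)]
        congr 1; field_simp; ring
    _ ≤ 3 / k ^ 2 * (14 * L ^ 2 / k ^ 2) := by gcongr
    _ = 42 * L ^ 2 / k ^ 4 := by ring

theorem stmt_13 : ∃ C : ℝ, 0 < C ∧ ∃ K : ℕ, ∀ k : ℕ, K ≤ k →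
    ∀ θ σ φ : ℝ, ∀ t u : ℕ, ∀ γ : ℝ,
      θ = 1 - 1/(k:ℝ) →
      σ = 1/(2*(k:ℝ)^2 - 10*k + 12) →
      φ = θ + σ/(k:ℝ) →
      t = ⌈((k:ℝ)/2) * Real.log k⌉₊ →
      u = ⌈2*(k:ℝ) * Real.log k⌉₊ - t - 4 →
      γ = (⌈2*(k:ℝ) * Real.log k⌉₊ : ℝ) - 2*(k:ℝ)*Real.log k →
      |θ^t * φ^u - Real.exp ((4 - γ)/(k:ℝ)) * (1/(k:ℝ)^2 - Real.log k/(k:ℝ)^3)|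
        ≤ C * (k:ℝ) ^ (-(7/2 : ℝ)) := by
  refine ⟨672, by norm_num, 100, ?_⟩
  rintro k hk θ σ φ t u γ rfl rfl rfl ht hu hγ
  have hk : (100 : ℝ) ≤ k := by exact_mod_cast hk
  have hk0 : (0 : ℝ) < k := by linarith
  have hL : 1 ≤ log k := by rw [le_log_iff_exp_le hk0]; linarith [exp_one_lt_d9]
  have hN := Nat.le_ceil (2 * (k : ℝ) * log k)
  have hN' := Nat.ceil_lt_add_one (by positivity : 0 ≤ 2 * (k : ℝ) * log k)
  have ht4 : (t : ℝ) + 4 ≤ 2 * k * log k := by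
    have := ht ▸ Nat.ceil_lt_add_one (by positivity : 0 ≤ (k : ℝ) / 2 * log k)
    nlinarith
  have htu := cast_add_eq_ceil_sub_four ht4 hu
  obtain ⟨hσ0, hσk⟩ := one_div_quadratic_nonneg_and_le (by linarith : (9 : ℝ) ≤ k)
  have hθ := abs_log_one_sub_inv_add_le (k := k) (by linarith) le_rfl (by positivity)
  rw [zero_div, add_zero] at hθ
  have hφ := abs_log_one_sub_inv_add_le (by linarith) hσ0 hσk
  have hX := abs_exponent_sub_le (γ := γ) hk0 hL (by linarith) (by linarith)
    (by rw [htu, hγ]; ring) (abs_mul_add_mul_add_le hθ hφ t u)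
  have hθ0 : 0 < 1 - 1 / (k : ℝ) := by rw [sub_pos, div_lt_one hk0]; linarith
  rw [← exp_log (pow_pos hθ0 t), ← exp_log (pow_pos (by positivity) u), ← exp_add,
    log_pow, log_pow]
  calc _ ≤ 42 * log k ^ 2 / k ^ 4 :=
        abs_exp_sub_exp_mul_le (by linarith) hL (two_mul_log_le_self (by linarith))
          (by rw [div_le_one hk0]; linarith) hX
    _ ≤ 42 * (16 * (k : ℝ) ^ (-(7 / 2) : ℝ)) := by
        rw [mul_div_assoc]; gcongr; exact log_sq_div_pow_four_le (by linarith)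
    _ = 672 * (k : ℝ) ^ (-(7 / 2 : ℝ)) := by ring
end

section
/- Let k ≥ 8, θ = 1 - 1/k, σ = 1/(2k² - 10k + 12), φ = θ + σ/k, t = ⌈(k/2) log k⌉, u = ⌈2k log k⌉ - t - 4. Define Λ = (k/(1-σ))(1 - φ^{u+1}) + ((k³ - k - (k³ - 2k² + 2)θ^{t-3})/(k² + k - kθ^{t-3}))φ^u. Then k - Λ = -kσ/(1-σ) + (k - 1 + O(k^{-1/2}))·θ^t·φ^u + O(k^{-5/2}) as k → ∞. -/
/-!
Since `k φ = k - 1 + σ`, the expression `k - Λ` equals `-kσ/(1-σ) + B φ^u` exactly, where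
`B = kσ/(1-σ) + x N/(k² + k - kx)`, `x = θ^(t-3)` and `N = k³ - 3k² + k + 2`; so one may take
`E₂ = 0` and `E₁ = B/θ^t - (k-1)`. As `t ≈ (k/2) log k`, the bounds
`-1/(k-1) ≤ log θ ≤ -1/k` sandwich `θ^t` between `k^(-1/2)/e` and `k^(-1/2)`. Then `kσ ≤ 1/k`
makes `kσ/((1-σ)θ^t) = O(k^(-1/2))`, and `N/(k² + k - kx)` is within `x + 1/k = O(k^(-1/2))`
of `(k-1)θ³`.
-/

open Real

noncomputable def phiPowCoeff (K σ x : ℝ) : ℝ :=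
  K * σ / (1 - σ) + x * (K ^ 3 - 3 * K ^ 2 + K + 2) / (K ^ 2 + K - K * x)

variable {K σ x φ : ℝ} {t : ℕ}

lemma sub_lambda_eq (u : ℕ) (hK : K ≠ 0) (hσ : σ ≠ 1) (hx : x ≠ K + 1)
    (hφ : φ = 1 - 1 / K + σ / K) :
    K - (K / (1 - σ) * (1 - φ ^ (u + 1))
        + (K ^ 3 - K - (K ^ 3 - 2 * K ^ 2 + 2) * x) / (K ^ 2 + K - K * x) * φ ^ u)
      = -K * σ / (1 - σ) + phiPowCoeff K σ x * φ ^ u := by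
  have h1σ : 1 - σ ≠ 0 := sub_ne_zero.2 (Ne.symm hσ)
  have hden : 1 + K - x ≠ 0 := fun h => hx (by linarith)
  have hKφ : K * φ = K - 1 + σ := by rw [hφ]; field_simp
  rw [phiPowCoeff, pow_succ]
  generalize φ ^ u = p
  field_simp
  linear_combination (1 + K - x) * K * p * hKφ

lemma one_sub_inv_pow_le_rpow (hK : 1 < K) (ht : K / 2 * log K ≤ t) :
    (1 - 1 / K) ^ t ≤ K ^ (-(1 / 2 : ℝ)) := by
  have hK0 : 0 < K := by linarith
  have : 0 ≤ 1 - 1 / K := by rw [sub_nonneg, div_le_one hK0]; exact hK.le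
  calc (1 - 1 / K) ^ t ≤ exp (-(1 / K)) ^ t := by
        gcongr
        linarith [add_one_le_exp (-(1 / K))]
    _ = exp (-(t / K)) := by rw [← exp_nat_mul]; ring_nf
    _ ≤ exp (log K * (-(1 / 2))) := by
        gcongr
        rw [← neg_le_neg_iff, neg_neg, le_div_iff₀ hK0]
        linarith
    _ = K ^ (-(1 / 2 : ℝ)) := (rpow_def_of_pos hK0 _).symm

lemma neg_inv_sub_one_le_log_one_sub_inv (hK : 1 < K) :
    -(1 / (K - 1)) ≤ log (1 - 1 / K) := by
  have hK1 : K - 1 ≠ 0 := by linarith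
  have hθ : 0 < 1 - 1 / K := by rw [sub_pos, div_lt_one (by linarith)]; exact hK
  convert one_sub_inv_le_log_of_pos hθ using 1
  field_simp
  ring

lemma rpow_div_exp_one_le_one_sub_inv_pow (hK : 3 ≤ K) (ht : t ≤ K / 2 * log K + 1) :
    K ^ (-(1 / 2 : ℝ)) / exp 1 ≤ (1 - 1 / K) ^ t := by
  have hK0 : 0 < K := by linarith
  have htK : t / (K - 1) ≤ log K / 2 + 1 := by
    rw [div_le_iff₀ (by linarith)]
    nlinarith [log_le_sub_one_of_pos hK0]
  have hlog := neg_inv_sub_one_le_log_one_sub_inv (by linarith : 1 < K)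
  calc K ^ (-(1 / 2 : ℝ)) / exp 1 = exp (-(log K / 2 + 1)) := by
        rw [rpow_def_of_pos hK0, ← exp_sub]; ring_nf
    _ ≤ exp (t * log (1 - 1 / K)) := by
        gcongr
        calc -(log K / 2 + 1) ≤ -(t / (K - 1)) := neg_le_neg htK
          _ = t * -(1 / (K - 1)) := by ring
          _ ≤ t * log (1 - 1 / K) := by gcongr
    _ = (1 - 1 / K) ^ t := by
        rw [exp_nat_mul, exp_log]
        rw [sub_pos, div_lt_one hK0]; linarith

lemma rpow_neg_half_mul_self (hK : 0 < K) :
    K ^ (-(1 / 2 : ℝ)) * K ^ (-(1 / 2 : ℝ)) = 1 / K := by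
  rw [← rpow_add hK]; norm_num [rpow_neg_one]

lemma mul_one_div_quadratic_le_one_div (hK : 9 ≤ K) :
    K * (1 / (2 * K ^ 2 - 10 * K + 12)) ≤ 1 / K := by
  have hK0 : 0 < K := by linarith
  rw [mul_one_div, div_le_div_iff₀ (by nlinarith) hK0]
  nlinarith

lemma abs_div_sub_mul_one_sub_inv_pow_le (hK : 2 ≤ K) (hx0 : 0 ≤ x) (hx1 : x ≤ 1) :
    |(K ^ 3 - 3 * K ^ 2 + K + 2) / (K ^ 2 + K - K * x) - (K - 1) * (1 - 1 / K) ^ 3|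
      ≤ x + 1 / K := by
  set N := K ^ 3 - 3 * K ^ 2 + K + 2
  set D := K ^ 2 + K - K * x
  have hK0 : 0 < K := by linarith
  have hN0 : 0 ≤ N := by
    nlinarith [mul_nonneg (sub_nonneg.2 hK) (by nlinarith : 0 ≤ K ^ 2 - K - 1)]
  have hNle : N ≤ K ^ 3 := by nlinarith
  have hD : K ^ 2 ≤ D := by nlinarith
  have hD0 : 0 < D := by nlinarith
  have hKK : 0 < K ^ 2 + K := by positivity
  have hshift : N / D - N / (K ^ 2 + K) = N * K * x / (D * (K ^ 2 + K)) := by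
    rw [div_sub_div _ _ hD0.ne' hKK.ne']
    ring
  have hshift_nonneg : 0 ≤ N * K * x / (D * (K ^ 2 + K)) := by
    apply div_nonneg _ (mul_pos hD0 hKK).le; positivity
  have hshift_le : N * K * x / (D * (K ^ 2 + K)) ≤ x := by
    rw [div_le_iff₀ (mul_pos hD0 hKK)]
    have : K ^ 2 * K ^ 2 ≤ D * (K ^ 2 + K) := by gcongr; linarith
    nlinarith [mul_le_mul_of_nonneg_right hNle (by positivity : 0 ≤ K * x)]
  have hlead : (K - 1) * (1 - 1 / K) ^ 3 - N / (K ^ 2 + K)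
      = (K ^ 3 - 3 * K + 1) / (K ^ 3 * (K + 1)) := by
    field_simp
    ring
  have hlead_nonneg : 0 ≤ (K ^ 3 - 3 * K + 1) / (K ^ 3 * (K + 1)) := by
    apply div_nonneg _ (by positivity); nlinarith
  have hlead_le : (K ^ 3 - 3 * K + 1) / (K ^ 3 * (K + 1)) ≤ 1 / K := by
    rw [div_le_div_iff₀ (by positivity) hK0]; nlinarith
  rw [abs_le]
  constructor <;> linarith

lemma abs_phiPowCoeff_div_sub_le {θ s : ℝ} (hK : 9 ≤ K) (hθ : θ = 1 - 1 / K)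
    (hσ : σ = 1 / (2 * K ^ 2 - 10 * K + 12)) (hs0 : 0 < s) (hss : s * s = 1 / K)
    (hx0 : 0 ≤ x) (hlo : s / 3 ≤ x * θ ^ 3) (hup : x * θ ^ 3 ≤ s) :
    |phiPowCoeff K σ x / (x * θ ^ 3) - (K - 1)| ≤ 12 * s := by
  have hK0 : 0 < K := by linarith
  have hK9 : 1 / K ≤ 1 / 9 := by gcongr
  have hs1 : s ≤ 1 / 3 := by nlinarith
  have hKs : 1 / K ≤ s := by nlinarith
  have hθ0 : 0 < θ := by rw [hθ, sub_pos, div_lt_one hK0]; linarith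
  have hθ3 : 1 / 2 ≤ θ ^ 3 := by
    calc (1 / 2 : ℝ) ≤ (8 / 9) ^ 3 := by norm_num
      _ ≤ θ ^ 3 := by
        gcongr
        rw [hθ, le_sub_comm, div_le_iff₀ hK0]
        linarith
  have hxs : x ≤ 2 * s := by nlinarith
  have hx1 : x ≤ 1 := by linarith
  have hx : x ≠ 0 := by rintro rfl; linarith
  have hKσ : K * σ ≤ 1 / K := hσ ▸ mul_one_div_quadratic_le_one_div hK
  have hσ0 : 0 < σ := by rw [hσ]; apply one_div_pos.2; nlinarith
  have hσ1 : 1 / 2 ≤ 1 - σ := by nlinarith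
  have hD0 : 0 < K ^ 2 + K - K * x := by nlinarith
  have hsplit : phiPowCoeff K σ x / (x * θ ^ 3) - (K - 1)
      = K * σ / ((1 - σ) * (x * θ ^ 3))
        + ((K ^ 3 - 3 * K ^ 2 + K + 2) / (K ^ 2 + K - K * x) - (K - 1) * θ ^ 3) / θ ^ 3 := by
    rw [phiPowCoeff]
    field_simp
    ring
  have hterm1 : K * σ / ((1 - σ) * (x * θ ^ 3)) ≤ 6 * s := by
    rw [div_le_iff₀ (by positivity)]
    nlinarith [mul_le_mul hσ1 hlo (by positivity) (by linarith)]
  have hterm2 : |((K ^ 3 - 3 * K ^ 2 + K + 2) / (K ^ 2 + K - K * x) - (K - 1) * θ ^ 3) / θ ^ 3|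
      ≤ 6 * s := by
    rw [abs_div, abs_of_pos (pow_pos hθ0 3), div_le_iff₀ (pow_pos hθ0 3)]
    have := hθ ▸ abs_div_sub_mul_one_sub_inv_pow_le (by linarith) hx0 hx1
    nlinarith [mul_le_mul_of_nonneg_left hθ3 hs0.le]
  rw [hsplit]
  calc _ ≤ |K * σ / ((1 - σ) * (x * θ ^ 3))| + _ := abs_add_le _ _
    _ ≤ 6 * s + 6 * s := by
        gcongr
        rw [abs_of_nonneg (by positivity)]
        exact hterm1
    _ = 12 * s := by ring

lemma abs_phiPowCoeff_div_pow_sub_le {θ : ℝ} (hK : 9 ≤ K) (hθ : θ = 1 - 1 / K)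
    (hσ : σ = 1 / (2 * K ^ 2 - 10 * K + 12))
    (htl : K / 2 * log K ≤ t) (htu : t ≤ K / 2 * log K + 1) :
    |phiPowCoeff K σ (θ ^ (t - 3)) / θ ^ t - (K - 1)| ≤ 12 * K ^ (-(1 / 2 : ℝ)) := by
  have hK0 : 0 < K := by linarith
  have ht3 : 3 ≤ t := by
    have hlog : 1 ≤ log K := by
      rw [le_log_iff_exp_le hK0]; exact exp_one_lt_d9.le.trans (by linarith)
    exact_mod_cast (show (3 : ℝ) ≤ t by nlinarith)
  have hθt : θ ^ t = θ ^ (t - 3) * θ ^ 3 := by rw [← pow_add, Nat.sub_add_cancel ht3]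
  have hup : θ ^ t ≤ K ^ (-(1 / 2 : ℝ)) := hθ ▸ one_sub_inv_pow_le_rpow (by linarith) htl
  have hlo : K ^ (-(1 / 2 : ℝ)) / 3 ≤ θ ^ t := by
    refine le_trans ?_ (hθ ▸ rpow_div_exp_one_le_one_sub_inv_pow (by linarith) htu)
    gcongr
    exact exp_one_lt_d9.le.trans (by norm_num)
  have hθ0 : 0 < θ := by rw [hθ, sub_pos, div_lt_one hK0]; linarith
  rw [hθt] at hup hlo ⊢
  exact abs_phiPowCoeff_div_sub_le hK hθ hσ (rpow_pos_of_pos hK0 _)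
    (rpow_neg_half_mul_self hK0) (by positivity) hlo hup

theorem stmt_18 : ∃ C : ℝ, 0 < C ∧ ∃ K : ℕ, 8 ≤ K ∧ ∀ k : ℕ, K ≤ k →
    ∀ θ σ φ Λ : ℝ, ∀ t u : ℕ,
      θ = 1 - 1/(k:ℝ) →
      σ = 1/(2*(k:ℝ)^2 - 10*k + 12) →
      φ = θ + σ/(k:ℝ) →
      t = ⌈((k:ℝ)/2) * Real.log k⌉₊ →
      u = ⌈2*(k:ℝ) * Real.log k⌉₊ - t - 4 →
      Λ = ((k:ℝ)/(1 - σ)) * (1 - φ^(u+1))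
          + (((k:ℝ)^3 - k - ((k:ℝ)^3 - 2*(k:ℝ)^2 + 2)*θ^(t-3))
              / ((k:ℝ)^2 + k - k*θ^(t-3))) * φ^u →
      ∃ E₁ E₂ : ℝ,
        |E₁| ≤ C * (k:ℝ) ^ (-(1/2:ℝ)) ∧ |E₂| ≤ C * (k:ℝ) ^ (-(5/2:ℝ)) ∧
        (k:ℝ) - Λ = -(k:ℝ)*σ/(1 - σ) + ((k:ℝ) - 1 + E₁) * θ^t * φ^u + E₂ := by
  refine ⟨12, by norm_num, 9, by norm_num, fun k hk θ σ φ Λ t u hθ hσ hφ ht _ hΛ => ?_⟩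
  have hK : (9 : ℝ) ≤ k := by exact_mod_cast hk
  have hlog : 0 ≤ (k : ℝ) / 2 * log k := by
    have := log_nonneg (by linarith : (1 : ℝ) ≤ k); positivity
  have htl : (k : ℝ) / 2 * log k ≤ t := ht ▸ Nat.le_ceil _
  have htu : (t : ℝ) ≤ k / 2 * log k + 1 := ht ▸ (Nat.ceil_lt_add_one hlog).le
  have hθ0 : 0 < θ := by rw [hθ, sub_pos, div_lt_one (by linarith)]; linarith
  have hθ1 : θ ≤ 1 := by rw [hθ]; linarith [one_div_pos.2 (by linarith : (0 : ℝ) < k)]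
  have hσ1 : σ ≠ 1 := by
    rw [hσ]; intro h; rw [div_eq_one_iff_eq (by nlinarith)] at h; nlinarith
  have hx : θ ^ (t - 3) ≠ k + 1 :=
    (show θ ^ (t - 3) < k + 1 by linarith [pow_le_one₀ (n := t - 3) hθ0.le hθ1]).ne
  refine ⟨_, 0, abs_phiPowCoeff_div_pow_sub_le hK hθ hσ htl htu,
    by rw [abs_zero]; positivity, ?_⟩
  rw [hΛ, sub_lambda_eq u (by positivity) hσ1 hx (by rw [hφ, hθ])]
  field_simp
  ring
end
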